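/- arXiv:2209.07149 — 4 statements merged into one kernel-verified Lean document; each statement's English description precedes it below -/
import Mathlib

section
/- For every real number z > 1, |z³·(e^{z²}·erfc(z) − (1/(2z) − 1/(4z³)))| ≤ 3/(8z²). -/
/-!
Integrating by parts against `d(-e^{-s²}/2) = s e^{-s²} ds` gives, for `z > 0`,
`∫_z^∞ e^{-s²} s⁻ⁿ ds = e^{-z²} / (2 z^{n+1}) - (n+1)/2 · ∫_z^∞ e^{-s²} s^{-(n+2)} ds`.
Since all these integrals are nonnegative, each is at most `e^{-z²} / (2 z^{n+1})`.
Applying the identity for `n = 0` and `n = 2` writes `e^{z²} erfc z - (1/(2z) - 1/(4z³))` as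
`3/4 · e^{z²} ∫_z^∞ e^{-s²} s⁻⁴ ds`, which lies between `0` and `3 / (8 z⁵)`.
-/

open Real

/-- The unnormalized complementary error function `erfc z = ∫_z^∞ e^{-s²} ds`. -/
noncomputable def erfc (z : ℝ) : ℝ := ∫ s in Set.Ioi z, Real.exp (-s ^ 2)

open MeasureTheory Set Filter Topology

lemma tendsto_exp_neg_sq_atTop : Tendsto (fun t : ℝ => exp (-t ^ 2)) atTop (𝓝 0) :=
  tendsto_exp_neg_atTop_nhds_zero.comp (tendsto_pow_atTop two_ne_zero)

lemma integrableOn_exp_neg_sq_div_pow {z : ℝ} (hz : 0 < z) (n : ℕ) :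
    IntegrableOn (fun s : ℝ => exp (-s ^ 2) / s ^ n) (Ioi z) := by
  have hgauss : IntegrableOn (fun s : ℝ => exp (-s ^ 2) / z ^ n) (Ioi z) := by
    simpa using ((integrable_exp_neg_mul_sq one_pos).div_const (z ^ n)).integrableOn
  refine hgauss.mono' ?_ ?_
  · refine ContinuousOn.aestronglyMeasurable ?_ measurableSet_Ioi
    exact (continuous_exp.comp (continuous_pow 2).neg).continuousOn.div
      (continuous_pow n).continuousOn fun s hs => pow_ne_zero n (hz.trans hs).ne'
  · filter_upwards [ae_restrict_mem measurableSet_Ioi] with s hs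
    have hs0 : 0 < s := hz.trans hs
    rw [norm_of_nonneg (by positivity)]
    gcongr
    exact hs.le

lemma setIntegral_Ioi_exp_neg_sq_div_pow_nonneg {z : ℝ} (hz : 0 ≤ z) (n : ℕ) :
    0 ≤ ∫ s in Ioi z, exp (-s ^ 2) / s ^ n :=
  setIntegral_nonneg measurableSet_Ioi fun s hs => by
    have : 0 < s := hz.trans_lt hs
    positivity

lemma setIntegral_Ioi_exp_neg_sq_div_pow {z : ℝ} (hz : 0 < z) (n : ℕ) :
    ∫ s in Ioi z, exp (-s ^ 2) / s ^ n
      = exp (-z ^ 2) / (2 * z ^ (n + 1))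
        - (n + 1) / 2 * ∫ s in Ioi z, exp (-s ^ 2) / s ^ (n + 2) := by
  have hderiv : ∀ s ∈ Ici z, HasDerivAt (fun t : ℝ => -exp (-t ^ 2) / (2 * t ^ (n + 1)))
      (exp (-s ^ 2) / s ^ n + (n + 1) / 2 * (exp (-s ^ 2) / s ^ (n + 2))) s := by
    intro s hs
    have hs0 : s ≠ 0 := (hz.trans_le hs).ne'
    have h := ((hasDerivAt_pow 2 s).fun_neg.exp.fun_neg).fun_div
      ((hasDerivAt_pow (n + 1) s).const_mul 2) (by positivity)
    refine h.congr_deriv ?_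
    rw [Nat.add_sub_cancel]
    push_cast
    field_simp
    ring
  have hlim : Tendsto (fun t : ℝ => -exp (-t ^ 2) / (2 * t ^ (n + 1))) atTop (𝓝 0) :=
    tendsto_exp_neg_sq_atTop.neg.div_atTop
      ((tendsto_pow_atTop n.succ_ne_zero).const_mul_atTop two_pos)
  have hint_n := integrableOn_exp_neg_sq_div_pow hz n
  have hint_n2 := (integrableOn_exp_neg_sq_div_pow hz (n + 2)).const_mul ((n + 1 : ℝ) / 2)
  have h := integral_Ioi_of_hasDerivAt_of_tendsto' hderiv (hint_n.add hint_n2) hlim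
  rw [integral_add hint_n hint_n2, integral_const_mul, zero_sub, neg_div, neg_neg] at h
  linarith

lemma setIntegral_Ioi_exp_neg_sq_div_pow_le {z : ℝ} (hz : 0 < z) (n : ℕ) :
    ∫ s in Ioi z, exp (-s ^ 2) / s ^ n ≤ exp (-z ^ 2) / (2 * z ^ (n + 1)) := by
  rw [setIntegral_Ioi_exp_neg_sq_div_pow hz n]
  exact sub_le_self _ (mul_nonneg (by positivity)
    (setIntegral_Ioi_exp_neg_sq_div_pow_nonneg hz.le (n + 2)))

lemma erfc_eq_add_setIntegral_Ioi {z : ℝ} (hz : 0 < z) :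
    erfc z = exp (-z ^ 2) * (1 / (2 * z) - 1 / (4 * z ^ 3))
      + 3 / 4 * ∫ s in Ioi z, exp (-s ^ 2) / s ^ 4 := by
  have h0 := setIntegral_Ioi_exp_neg_sq_div_pow hz 0
  have h2 := setIntegral_Ioi_exp_neg_sq_div_pow hz 2
  simp only [pow_zero, div_one] at h0
  rw [erfc, h0, h2]
  push_cast
  field_simp
  ring

/-- For every `z > 1`,
`|z³·(e^{z²}·erfc z − (1/(2z) − 1/(4z³)))| ≤ 3/(8z²)`. -/
theorem abs_erfc_remainder_le (z : ℝ) (hz : 1 < z) :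
    |z ^ 3 * (Real.exp (z ^ 2) * erfc z - (1 / (2 * z) - 1 / (4 * z ^ 3)))|
      ≤ 3 / (8 * z ^ 2) := by
  have hz0 : 0 < z := one_pos.trans hz
  set R := ∫ s in Ioi z, exp (-s ^ 2) / s ^ 4
  have hR0 : 0 ≤ R := setIntegral_Ioi_exp_neg_sq_div_pow_nonneg hz0.le 4
  have hR : R ≤ exp (-z ^ 2) / (2 * z ^ 5) := setIntegral_Ioi_exp_neg_sq_div_pow_le hz0 4
  have hremainder : exp (z ^ 2) * erfc z - (1 / (2 * z) - 1 / (4 * z ^ 3))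
      = 3 / 4 * exp (z ^ 2) * R := by
    rw [erfc_eq_add_setIntegral_Ioi hz0, exp_neg]
    field_simp
    ring
  rw [hremainder, abs_of_nonneg (by positivity)]
  calc z ^ 3 * (3 / 4 * exp (z ^ 2) * R)
      ≤ z ^ 3 * (3 / 4 * exp (z ^ 2) * (exp (-z ^ 2) / (2 * z ^ 5))) := by gcongr
    _ = 3 / (8 * z ^ 2) := by
      rw [exp_neg]
      field_simp
      ring
end

section
/- The function z ↦ z²·(1/2 − z·erfc(z)·e^{z²}) tends to 1/4 as z → ∞. -/
/-!
Repeated integration by parts gives the asymptotic expansion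
`erfc z ≈ e^{-z²} (1/(2z) - 1/(4z³) + 3/(8z⁵))`. The truncations after two and after three terms
bound `erfc` from below and from above: each bound differs from `erfc` by a function that tends
to `0` at infinity and whose derivative, a multiple of `e^{-z²} z⁻⁴` resp. `e^{-z²} z⁻⁶`, has
constant sign. Multiplying by `z³ e^{z²}` squeezes `z² (1/2 - z e^{z²} erfc z)` between
`1/4 - 3/(8z²)` and `1/4`.
-/

open Real Filter Topology

open MeasureTheory Set

lemma integrable_exp_neg_sq : Integrable (fun s : ℝ => exp (-s ^ 2)) := by
  simpa using integrable_exp_neg_mul_sq one_pos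

lemma hasDerivAt_erfc (z : ℝ) : HasDerivAt erfc (-exp (-z ^ 2)) z := by
  have h_eq : erfc = fun x => (∫ s in Ioi 0, exp (-s ^ 2)) - ∫ s in (0 : ℝ)..x, exp (-s ^ 2) := by
    ext x
    rw [← intervalIntegral.integral_Ioi_sub_Ioi' integrable_exp_neg_sq.integrableOn
      integrable_exp_neg_sq.integrableOn, sub_sub_cancel, erfc]
  rw [h_eq]
  exact (intervalIntegral.integral_hasDerivAt_right integrable_exp_neg_sq.intervalIntegrable
    integrable_exp_neg_sq.aestronglyMeasurable.stronglyMeasurableAtFilter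
    (by fun_prop)).const_sub _

lemma tendsto_erfc_atTop : Tendsto erfc atTop (𝓝 0) :=
  tendsto_integral_Ioi_zero tendsto_id

lemma tendsto_exp_neg_sq_mul_comp_inv {p : ℝ → ℝ} (hp : ContinuousAt p 0) :
    Tendsto (fun z => exp (-z ^ 2) * p z⁻¹) atTop (𝓝 0) := by
  have h_exp : Tendsto (fun z : ℝ => exp (-z ^ 2)) atTop (𝓝 0) :=
    tendsto_exp_comp_nhds_zero.mpr (tendsto_neg_atTop_atBot.comp (tendsto_pow_atTop two_ne_zero))
  simpa using h_exp.mul (hp.tendsto.comp tendsto_inv_atTop_zero)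

lemma nonneg_of_hasDerivAt_nonpos_of_tendsto_zero {f f' : ℝ → ℝ} {a z : ℝ}
    (hf : ∀ x ∈ Ioi a, HasDerivAt f (f' x) x) (hf' : ∀ x ∈ Ioi a, f' x ≤ 0)
    (hlim : Tendsto f atTop (𝓝 0)) (hz : a < z) : 0 ≤ f z := by
  have h_anti : AntitoneOn f (Ioi a) := by
    refine antitoneOn_of_hasDerivWithinAt_nonpos (f' := f') (convex_Ioi a)
      (fun x hx => (hf x hx).continuousAt.continuousWithinAt) (fun x hx => ?_) (fun x hx => ?_)
    · rw [interior_Ioi] at hx ⊢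
      exact (hf x hx).hasDerivWithinAt
    · exact hf' x (interior_subset hx)
  refine le_of_tendsto hlim ?_
  filter_upwards [eventually_ge_atTop z] with w hw
  exact h_anti hz (hz.trans_le hw) hw

noncomputable def erfcLower (z : ℝ) : ℝ := exp (-z ^ 2) * (z⁻¹ / 2 - z⁻¹ ^ 3 / 4)

noncomputable def erfcUpper (z : ℝ) : ℝ := exp (-z ^ 2) * (z⁻¹ / 2 - z⁻¹ ^ 3 / 4 + 3 * z⁻¹ ^ 5 / 8)

lemma hasDerivAt_exp_neg_sq_mul {p : ℝ → ℝ} {p' z : ℝ} (hp : HasDerivAt p p' z) :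
    HasDerivAt (fun x => exp (-x ^ 2) * p x) (exp (-z ^ 2) * (p' - 2 * z * p z)) z := by
  refine (((hasDerivAt_pow 2 z).fun_neg.exp).fun_mul hp).congr_deriv ?_
  push_cast
  ring

lemma hasDerivAt_erfcLower {z : ℝ} (hz : z ≠ 0) :
    HasDerivAt erfcLower (exp (-z ^ 2) * (-1 + 3 / 4 * z⁻¹ ^ 4)) z := by
  have h_inv := hasDerivAt_inv hz
  have hp : HasDerivAt (fun x : ℝ => x⁻¹ / 2 - x⁻¹ ^ 3 / 4) _ z :=
    (h_inv.div_const 2).fun_sub ((h_inv.fun_pow 3).div_const 4)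
  refine (hasDerivAt_exp_neg_sq_mul hp).congr_deriv ?_
  norm_num
  field_simp
  ring

lemma hasDerivAt_erfcUpper {z : ℝ} (hz : z ≠ 0) :
    HasDerivAt erfcUpper (exp (-z ^ 2) * (-1 - 15 / 8 * z⁻¹ ^ 6)) z := by
  have h_inv := hasDerivAt_inv hz
  have hp : HasDerivAt (fun x : ℝ => x⁻¹ / 2 - x⁻¹ ^ 3 / 4 + 3 * x⁻¹ ^ 5 / 8) _ z :=
    ((h_inv.div_const 2).fun_sub ((h_inv.fun_pow 3).div_const 4)).fun_add
      (((h_inv.fun_pow 5).const_mul 3).div_const 8)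
  refine (hasDerivAt_exp_neg_sq_mul hp).congr_deriv ?_
  norm_num
  field_simp
  ring

lemma tendsto_erfcLower_atTop : Tendsto erfcLower atTop (𝓝 0) :=
  tendsto_exp_neg_sq_mul_comp_inv (p := fun w => w / 2 - w ^ 3 / 4) (by fun_prop)

lemma tendsto_erfcUpper_atTop : Tendsto erfcUpper atTop (𝓝 0) :=
  tendsto_exp_neg_sq_mul_comp_inv (p := fun w => w / 2 - w ^ 3 / 4 + 3 * w ^ 5 / 8) (by fun_prop)

lemma erfcLower_le_erfc {z : ℝ} (hz : 0 < z) : erfcLower z ≤ erfc z := by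
  refine sub_nonneg.mp (nonneg_of_hasDerivAt_nonpos_of_tendsto_zero
    (f := fun x => erfc x - erfcLower x)
    (fun x hx => (hasDerivAt_erfc x).fun_sub (hasDerivAt_erfcLower (ne_of_gt hx)))
    (fun x _ => ?_) (by simpa using tendsto_erfc_atTop.sub tendsto_erfcLower_atTop) hz)
  linarith [show 0 ≤ exp (-x ^ 2) * x⁻¹ ^ 4 by positivity]

lemma erfc_le_erfcUpper {z : ℝ} (hz : 0 < z) : erfc z ≤ erfcUpper z := by
  refine sub_nonneg.mp (nonneg_of_hasDerivAt_nonpos_of_tendsto_zero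
    (f := fun x => erfcUpper x - erfc x)
    (fun x hx => (hasDerivAt_erfcUpper (ne_of_gt hx)).fun_sub (hasDerivAt_erfc x))
    (fun x _ => ?_) (by simpa using tendsto_erfcUpper_atTop.sub tendsto_erfc_atTop) hz)
  linarith [show 0 ≤ exp (-x ^ 2) * x⁻¹ ^ 6 by positivity]

lemma sq_mul_half_sub_mul_erfc_mul_exp_mem_Icc {z : ℝ} (hz : 0 < z) :
    z ^ 2 * (1 / 2 - z * erfc z * exp (z ^ 2)) ∈ Icc (1 / 4 - 3 / 8 * z⁻¹ ^ 2) (1 / 4) := by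
  have h_scale : 0 ≤ z ^ 3 * exp (z ^ 2) := by positivity
  have h_lower := mul_le_mul_of_nonneg_left (erfcLower_le_erfc hz) h_scale
  have h_upper := mul_le_mul_of_nonneg_left (erfc_le_erfcUpper hz) h_scale
  have h_lower_eq : z ^ 3 * exp (z ^ 2) * erfcLower z = z ^ 2 / 2 - 1 / 4 := by
    rw [erfcLower, exp_neg]
    field_simp
  have h_upper_eq :
      z ^ 3 * exp (z ^ 2) * erfcUpper z = z ^ 2 / 2 - 1 / 4 + 3 / 8 * z⁻¹ ^ 2 := by
    rw [erfcUpper, exp_neg]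
    field_simp
  constructor <;> linarith

/-- The function `z ↦ z²·(1/2 − z·erfc z·e^{z²})` tends to `1/4` as `z → ∞`. -/
theorem tendsto_sq_mul_half_sub_erfc :
    Tendsto (fun z : ℝ => z ^ 2 * (1 / 2 - z * erfc z * Real.exp (z ^ 2)))
      atTop (𝓝 (1 / 4)) := by
  have h_lower : Tendsto (fun z : ℝ => 1 / 4 - 3 / 8 * z⁻¹ ^ 2) atTop (𝓝 (1 / 4)) := by
    simpa using ((tendsto_inv_atTop_zero.pow 2).const_mul (3 / 8 : ℝ)).const_sub (1 / 4 : ℝ)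
  refine tendsto_of_tendsto_of_tendsto_of_le_of_le' h_lower tendsto_const_nhds ?_ ?_ <;>
  filter_upwards [eventually_gt_atTop 0] with z hz
  exacts [(sq_mul_half_sub_mul_erfc_mul_exp_mem_Icc hz).1,
    (sq_mul_half_sub_mul_erfc_mul_exp_mem_Icc hz).2]
end

section
/- Let ε > 0 and let V, S : ℝ × ℝ → ℝ be C² on ℝ × (0,∞), with V strictly positive there, and suppose both satisfy the heat equation V_t = (ε/2)·V_xx and S_t = (ε/2)·S_xx on ℝ × (0,∞). Then the function R := S/V satisfies R_t + R_x · (−ε·V_x/V) = (ε/2)·R_xx on ℝ × (0,∞). -/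
/-!
By the quotient rule and the two heat equations, `R_t = (ε/2)·(S_xx V - S V_xx)/V²`, while
differentiating `R = S/V` twice in space gives `(S_xx V - S V_xx)/V² = R_xx + 2 R_x V_x/V`.
Substituting the second identity into the first yields the drift term `-ε R_x V_x/V`.
-/

open Set Filter Topology

theorem ContDiffAt.comp_prodMk_const_right {𝕜 E F G : Type*} [NontriviallyNormedField 𝕜]
    [NormedAddCommGroup E] [NormedSpace 𝕜 E] [NormedAddCommGroup F] [NormedSpace 𝕜 F]
    [NormedAddCommGroup G] [NormedSpace 𝕜 G] {n : WithTop ℕ∞} {W : E × F → G} {x : E} {y : F}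
    (h : ContDiffAt 𝕜 n W (x, y)) : ContDiffAt 𝕜 n (fun x' => W (x', y)) x :=
  h.comp x (contDiffAt_id.prodMk contDiffAt_const)

theorem ContDiffAt.comp_prodMk_const_left {𝕜 E F G : Type*} [NontriviallyNormedField 𝕜]
    [NormedAddCommGroup E] [NormedSpace 𝕜 E] [NormedAddCommGroup F] [NormedSpace 𝕜 F]
    [NormedAddCommGroup G] [NormedSpace 𝕜 G] {n : WithTop ℕ∞} {W : E × F → G} {x : E} {y : F}
    (h : ContDiffAt 𝕜 n W (x, y)) : ContDiffAt 𝕜 n (fun y' => W (x, y')) y :=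
  h.comp y (contDiffAt_const.prodMk contDiffAt_id)

theorem ContDiffOn.contDiffAt_of_pos {E G : Type*} [NormedAddCommGroup E] [NormedSpace ℝ E]
    [NormedAddCommGroup G] [NormedSpace ℝ G] {n : WithTop ℕ∞} {W : E × ℝ → G}
    (hW : ContDiffOn ℝ n W (univ ×ˢ Ioi 0)) (x : E) {t : ℝ} (ht : 0 < t) :
    ContDiffAt ℝ n W (x, t) :=
  hW.contDiffAt ((isOpen_univ.prod isOpen_Ioi).mem_nhds ⟨trivial, ht⟩)

section Quotient

variable {𝕜 : Type*} [NontriviallyNormedField 𝕜] {f g : 𝕜 → 𝕜} {x : 𝕜}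

theorem ContDiffAt.hasDerivAt_deriv (hf : ContDiffAt 𝕜 2 f x) :
    HasDerivAt (deriv f) (deriv (deriv f) x) x :=
  ((hf.derivWithin (m := 1) (by norm_num)).differentiableAt one_ne_zero).hasDerivAt

theorem deriv_deriv_div_add (hf : ContDiffAt 𝕜 2 f x) (hg : ContDiffAt 𝕜 2 g x) (hgx : g x ≠ 0) :
    deriv (fun y => deriv (fun y' => f y' / g y') y) x
        + 2 * deriv (fun y => f y / g y) x * deriv g x / g x
      = (deriv (fun y => deriv f y) x * g x - f x * deriv (fun y => deriv g y) x) / g x ^ 2 := by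
  have hquot : (fun y => deriv (fun y' => f y' / g y') y)
      =ᶠ[𝓝 x] fun y => (deriv f y * g y - f y * deriv g y) / g y ^ 2 := by
    filter_upwards [hf.eventually (by simp), hg.eventually (by simp),
      hg.continuousAt.eventually_ne hgx] with y hfy hgy hy
    exact deriv_fun_div (hfy.differentiableAt two_ne_zero) (hgy.differentiableAt two_ne_zero) hy
  have hf₁ := (hf.differentiableAt two_ne_zero).hasDerivAt
  have hg₁ := (hg.differentiableAt two_ne_zero).hasDerivAt
  have hquot' := ((hf.hasDerivAt_deriv.fun_mul hg₁).fun_sub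
    (hf₁.fun_mul hg.hasDerivAt_deriv)).fun_div (hg₁.fun_pow 2) (pow_ne_zero 2 hgx)
  rw [hquot.deriv_eq, hquot'.deriv, (hf₁.fun_div hg₁ hgx).deriv]
  field_simp
  ring

end Quotient

theorem hopf_cole_density_general (ε : ℝ) (V S : ℝ × ℝ → ℝ)
    (hV : ContDiffOn ℝ 2 V (Set.univ ×ˢ Set.Ioi (0 : ℝ)))
    (hS : ContDiffOn ℝ 2 S (Set.univ ×ˢ Set.Ioi (0 : ℝ)))
    (hVpos : ∀ x t : ℝ, 0 < t → 0 < V (x, t))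
    (hheatV : ∀ x t : ℝ, 0 < t →
      deriv (fun s => V (x, s)) t
        = ε / 2 * deriv (fun y => deriv (fun y' => V (y', t)) y) x)
    (hheatS : ∀ x t : ℝ, 0 < t →
      deriv (fun s => S (x, s)) t
        = ε / 2 * deriv (fun y => deriv (fun y' => S (y', t)) y) x)
    (R : ℝ → ℝ → ℝ)
    (hR : ∀ x t : ℝ, R x t = S (x, t) / V (x, t)) :
    ∀ x t : ℝ, 0 < t →
      deriv (fun s => R x s) t
          + deriv (fun y => R y t) x * (-ε * deriv (fun y => V (y, t)) x / V (x, t))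
        = ε / 2 * deriv (fun y => deriv (fun y' => R y' t) y) x := by
  intro x t ht
  have hVx := (hV.contDiffAt_of_pos x ht).comp_prodMk_const_right
  have hSx := (hS.contDiffAt_of_pos x ht).comp_prodMk_const_right
  have hVt := (hV.contDiffAt_of_pos x ht).comp_prodMk_const_left
  have hSt := (hS.contDiffAt_of_pos x ht).comp_prodMk_const_left
  have hV0 := (hVpos x t ht).ne'
  have hRt : deriv (fun s => S (x, s) / V (x, s)) t
      = (deriv (fun s => S (x, s)) t * V (x, t) - S (x, t) * deriv (fun s => V (x, s)) t)
        / V (x, t) ^ 2 :=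
    deriv_fun_div (hSt.differentiableAt two_ne_zero) (hVt.differentiableAt two_ne_zero) hV0
  have hRxx := deriv_deriv_div_add hSx hVx hV0
  simp only [hR]
  rw [hRt, hheatS x t ht, hheatV x t ht]
  linear_combination (-ε / 2) * hRxx

/-- If `V, S : ℝ × ℝ → ℝ` are C² on `ℝ × (0,∞)`, `V` is strictly positive there, and both
satisfy the heat equation `V_t = (ε/2)·V_xx`, `S_t = (ε/2)·S_xx` there, then `R := S/V`
satisfies `R_t + R_x·(−ε·V_x/V) = (ε/2)·R_xx` on `ℝ × (0,∞)`. -/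
theorem hopf_cole_density (ε : ℝ) (hε : 0 < ε) (V S : ℝ × ℝ → ℝ)
    (hV : ContDiffOn ℝ 2 V (Set.univ ×ˢ Set.Ioi (0 : ℝ)))
    (hS : ContDiffOn ℝ 2 S (Set.univ ×ˢ Set.Ioi (0 : ℝ)))
    (hVpos : ∀ x t : ℝ, 0 < t → 0 < V (x, t))
    (hheatV : ∀ x t : ℝ, 0 < t →
      deriv (fun s => V (x, s)) t
        = ε / 2 * deriv (fun y => deriv (fun y' => V (y', t)) y) x)
    (hheatS : ∀ x t : ℝ, 0 < t →
      deriv (fun s => S (x, s)) t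
        = ε / 2 * deriv (fun y => deriv (fun y' => S (y', t)) y) x)
    (R : ℝ → ℝ → ℝ)
    (hR : ∀ x t : ℝ, R x t = S (x, t) / V (x, t)) :
    ∀ x t : ℝ, 0 < t →
      deriv (fun s => R x s) t
          + deriv (fun y => R y t) x * (-ε * deriv (fun y => V (y, t)) x / V (x, t))
        = ε / 2 * deriv (fun y => deriv (fun y' => R y' t) y) x :=
  hopf_cole_density_general ε V S hV hS hVpos hheatV hheatS R hR
end

section
/- Let u_a < 0, t > 0, and x < a be real numbers, and let erfc(z) = ∫_z^∞ e^{−s²} ds. If x < a − √(−2 u_a t), then the function ε ↦ erfc((a−x)/√(2tε)) · e^{−u_a/ε} tends to 0 as ε → 0⁺; if a − √(−2 u_a t) < x < a, then this function tends to +∞ as ε → 0⁺. -/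
/-!
The substitution `z = (a - x) / √(2tε)`, which tends to `∞` as `ε → 0⁺`, turns the function into
`erfc z · e^{κ z²}` with `κ = -2 u_a t / (a - x)²`. The bounds `e^{-(z+1)²} ≤ erfc z ≤ e^{-z²} / z`
show that this tends to `0` when `κ ≤ 1` and to `∞` when `κ > 1`; the two conditions on `x` say
exactly `κ < 1` and `κ > 1`.
-/

open Real Filter Topology

open MeasureTheory Set

lemma integrableOn_exp_neg_sq_Ioi (z : ℝ) : IntegrableOn (fun s : ℝ => exp (-s ^ 2)) (Ioi z) := by
  simpa using (integrable_exp_neg_mul_sq one_pos).integrableOn (s := Ioi z)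

lemma erfc_nonneg (z : ℝ) : 0 ≤ erfc z :=
  setIntegral_nonneg measurableSet_Ioi fun _ _ => (exp_pos _).le

/-- On `(z, ∞)` the Gaussian is dominated by the exponential `e^{-z s}` since `s² ≥ z s`. -/
lemma erfc_le_exp_neg_sq_div {z : ℝ} (hz : 0 < z) : erfc z ≤ exp (-z ^ 2) / z := by
  have hneg : -z < 0 := neg_lt_zero.2 hz
  calc erfc z ≤ ∫ s in Ioi z, exp (-z * s) := by
        refine setIntegral_mono_on (integrableOn_exp_neg_sq_Ioi z)
          (integrableOn_exp_mul_Ioi hneg z) measurableSet_Ioi fun s (hs : z < s) => ?_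
        exact exp_le_exp.2 (by nlinarith)
    _ = exp (-z ^ 2) / z := by
        rw [integral_exp_mul_Ioi hneg, neg_div_neg_eq, neg_mul, ← sq]

lemma exp_neg_add_one_sq_le_erfc {z : ℝ} (hz : 0 ≤ z) : exp (-(z + 1) ^ 2) ≤ erfc z := by
  have hIoc : Ioc z (z + 1) ⊆ Ioi z := Ioc_subset_Ioi_self
  calc exp (-(z + 1) ^ 2) = volume.real (Ioc z (z + 1)) • exp (-(z + 1) ^ 2) := by
        simp [Real.volume_real_Ioc]
    _ ≤ ∫ s in Ioc z (z + 1), exp (-s ^ 2) := by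
        refine setIntegral_ge_of_const_le measurableSet_Ioc measure_Ioc_lt_top.ne
          (fun s hs => exp_le_exp.2 ?_) ((integrableOn_exp_neg_sq_Ioi z).mono_set hIoc)
        nlinarith [hs.1, hs.2]
    _ ≤ erfc z :=
        setIntegral_mono_set (integrableOn_exp_neg_sq_Ioi z)
          (Eventually.of_forall fun _ => (exp_pos _).le) hIoc.eventuallyLE

lemma erfc_mul_exp_mul_sq_le_inv {κ z : ℝ} (hκ : κ ≤ 1) (hz : 0 < z) :
    erfc z * exp (κ * z ^ 2) ≤ z⁻¹ :=
  calc erfc z * exp (κ * z ^ 2) ≤ exp (-z ^ 2) / z * exp (z ^ 2) := by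
        gcongr
        · exact erfc_le_exp_neg_sq_div hz
        · nlinarith
    _ = z⁻¹ := by rw [div_mul_eq_mul_div, ← exp_add, neg_add_cancel, exp_zero, one_div]

theorem tendsto_erfc_mul_exp_mul_sq_atTop_nhds_zero {κ : ℝ} (hκ : κ ≤ 1) :
    Tendsto (fun z => erfc z * exp (κ * z ^ 2)) atTop (𝓝 0) := by
  refine tendsto_of_tendsto_of_tendsto_of_le_of_le' tendsto_const_nhds tendsto_inv_atTop_zero
    (Eventually.of_forall fun z => mul_nonneg (erfc_nonneg z) (exp_pos _).le) ?_
  filter_upwards [eventually_gt_atTop 0] with z hz using erfc_mul_exp_mul_sq_le_inv hκ hz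

theorem tendsto_erfc_mul_exp_mul_sq_atTop_atTop {κ : ℝ} (hκ : 1 < κ) :
    Tendsto (fun z => erfc z * exp (κ * z ^ 2)) atTop atTop := by
  have hpoly : Tendsto (fun z : ℝ => z * ((κ - 1) * z - 2) - 1) atTop atTop :=
    tendsto_atTop_add_const_right _ _ <| tendsto_id.atTop_mul_atTop₀ <|
      tendsto_atTop_add_const_right _ _ <| tendsto_id.const_mul_atTop (sub_pos.2 hκ)
  refine tendsto_atTop_mono' _ ?_ (tendsto_exp_atTop.comp hpoly)
  filter_upwards [eventually_ge_atTop 0] with z hz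
  calc exp (z * ((κ - 1) * z - 2) - 1) = exp (-(z + 1) ^ 2) * exp (κ * z ^ 2) := by
        rw [← exp_add]; ring_nf
    _ ≤ erfc z * exp (κ * z ^ 2) := by gcongr; exact exp_neg_add_one_sq_le_erfc hz

lemma tendsto_div_sqrt_mul_nhdsGT_zero_atTop {b c : ℝ} (hb : 0 < b) (hc : 0 < c) :
    Tendsto (fun ε => c / √(b * ε)) (𝓝[>] 0) atTop := by
  have hsqrt : Tendsto (fun ε => √(b * ε)) (𝓝[>] 0) (𝓝[>] 0) := by
    refine tendsto_nhdsWithin_of_tendsto_nhds_of_eventually_within _ ?_ ?_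
    · have : Continuous fun ε => √(b * ε) := by fun_prop
      simpa using this.continuousWithinAt.tendsto (x := 0) (s := Ioi 0)
    · filter_upwards [self_mem_nhdsWithin] with ε (hε : 0 < ε)
      exact sqrt_pos.2 (mul_pos hb hε)
  simpa only [div_eq_mul_inv, Function.comp_def] using
    (tendsto_inv_nhdsGT_zero.comp hsqrt).const_mul_atTop hc

theorem tendsto_erfc_mul_exp_general (u_a t x a : ℝ) (ht : 0 < t) (hx : x < a) :
    (x < a - Real.sqrt (-2 * u_a * t) →
      Tendsto (fun ε : ℝ => erfc ((a - x) / Real.sqrt (2 * t * ε)) * Real.exp (-u_a / ε))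
        (𝓝[>] 0) (𝓝 0))
    ∧ (a - Real.sqrt (-2 * u_a * t) < x →
      Tendsto (fun ε : ℝ => erfc ((a - x) / Real.sqrt (2 * t * ε)) * Real.exp (-u_a / ε))
        (𝓝[>] 0) atTop) := by
  have hc : 0 < a - x := sub_pos.2 hx
  set κ := -2 * u_a * t / (a - x) ^ 2
  have hz := tendsto_div_sqrt_mul_nhdsGT_zero_atTop (mul_pos two_pos ht) hc
  have hsubst : (fun ε => erfc ((a - x) / √(2 * t * ε)) * exp (-u_a / ε)) =ᶠ[𝓝[>] 0]
      (fun z => erfc z * exp (κ * z ^ 2)) ∘ fun ε => (a - x) / √(2 * t * ε) := by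
    filter_upwards [self_mem_nhdsWithin] with ε (hε : 0 < ε)
    rw [Function.comp_apply, div_pow, sq_sqrt (by positivity)]
    congr 2
    simp only [κ]
    field_simp
  refine ⟨fun h => ?_, fun h => ?_⟩
  · refine (tendsto_congr' hsubst).2 ((tendsto_erfc_mul_exp_mul_sq_atTop_nhds_zero ?_).comp hz)
    exact (div_le_one (by positivity)).2 ((sqrt_lt' hc).1 (by linarith)).le
  · refine (tendsto_congr' hsubst).2 ((tendsto_erfc_mul_exp_mul_sq_atTop_atTop ?_).comp hz)
    exact (one_lt_div (by positivity)).2 ((lt_sqrt hc.le).1 (by linarith))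

/-- Asymptotics of `ε ↦ erfc((a−x)/√(2tε))·e^{−u_a/ε}` as `ε → 0⁺` for `u_a < 0`, `t > 0`,
`x < a`: it tends to `0` if `x < a − √(−2·u_a·t)` and to `+∞` if `a − √(−2·u_a·t) < x < a`. -/
theorem tendsto_erfc_mul_exp (u_a t x a : ℝ) (hua : u_a < 0) (ht : 0 < t) (hx : x < a) :
    (x < a - Real.sqrt (-2 * u_a * t) →
      Tendsto (fun ε : ℝ => erfc ((a - x) / Real.sqrt (2 * t * ε)) * Real.exp (-u_a / ε))
        (𝓝[>] 0) (𝓝 0))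
    ∧ (a - Real.sqrt (-2 * u_a * t) < x →
      Tendsto (fun ε : ℝ => erfc ((a - x) / Real.sqrt (2 * t * ε)) * Real.exp (-u_a / ε))
        (𝓝[>] 0) atTop) :=
  tendsto_erfc_mul_exp_general u_a t x a ht hx
end
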